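/- arXiv:2405.00990 — 2 statements merged into one kernel-verified Lean document; each statement's English description precedes it below -/
import Mathlib

section
/- Let K be a simplicial complex on [m] with no ghost vertices whose geometric realization is homeomorphic to the n-sphere, with n ≥ 1. Then every vertex of K has degree at least n+1, i.e., δ(K) ≥ n+1. -/
/-- A simplicial complex: a nonempty collection of finite subsets closed under taking subsets. -/
def IsSimplicialComplex (K : Set (Finset ℕ)) : Prop :=
  K.Nonempty ∧ ∀ σ ∈ K, ∀ τ ⊆ σ, τ ∈ K

/-- The degree of a vertex `x`: the number of vertices of its link, i.e. the number of
vertices `v ≠ x` adjacent to `x`. -/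
noncomputable def vertexDegree (K : Set (Finset ℕ)) (x : ℕ) : ℕ :=
  Set.ncard {v : ℕ | v ≠ x ∧ ({x, v} : Finset ℕ) ∈ K}

/-- Every vertex of an `n`-sphere triangulation (`n ≥ 1`) has degree at least `n + 1`.
The sphere condition is encoded by its combinatorial consequences: all faces have
cardinality at most `n + 1`, every face is contained in a maximal face of cardinality
`n + 1`, and for every maximal face `σ` and facet `τ` of `σ` there is a unique vertex
`u ∉ σ` with `τ ∪ {u} ∈ K`. -/
theorem sphere_min_degree (n m : ℕ) (hn : 1 ≤ n) (K : Set (Finset ℕ))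
    (hK : IsSimplicialComplex K)
    (hvert : ∀ σ ∈ K, σ ⊆ Finset.range m)
    (hghost : ∀ x ∈ Finset.range m, ({x} : Finset ℕ) ∈ K)
    (hdim : ∀ σ ∈ K, σ.card ≤ n + 1)
    (hpure : ∀ σ ∈ K, ∃ σ' ∈ K, σ ⊆ σ' ∧ σ'.card = n + 1)
    (hfacet : ∀ σ ∈ K, σ.card = n + 1 → ∀ τ ⊆ σ, τ.card = n →
      ∃! u : ℕ, u ∉ σ ∧ insert u τ ∈ K) :
    ∀ x ∈ Finset.range m, n + 1 ≤ vertexDegree K x := by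
  intro x hx
  obtain ⟨_, hdown⟩ := hK
  -- maximal face σ containing x
  obtain ⟨σ, hσK, hxσ', hσcard⟩ := hpure {x} (hghost x hx)
  have hxσ : x ∈ σ := hxσ' (Finset.mem_singleton_self x)
  -- pick v ∈ σ, v ≠ x
  have h2 : 2 ≤ σ.card := by omega
  obtain ⟨v, hvσ, hvx⟩ : ∃ v ∈ σ, v ≠ x := by
    by_contra h
    push_neg at h
    have : σ ⊆ {x} := fun y hy => Finset.mem_singleton.2 (h y hy)
    have := Finset.card_le_card this
    simp at this
    omega
  -- facet τ = σ.erase v; get new vertex u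
  have hτ : σ.erase v ⊆ σ := Finset.erase_subset v σ
  have hτcard : (σ.erase v).card = n := by
    rw [Finset.card_erase_of_mem hvσ, hσcard]; omega
  obtain ⟨u, ⟨huσ, huK⟩, _⟩ := hfacet σ hσK hσcard (σ.erase v) hτ hτcard
  have hxτ : x ∈ σ.erase v := Finset.mem_erase.2 ⟨hvx.symm, hxσ⟩
  -- the candidate neighbor set
  set S : Finset ℕ := insert u (σ.erase x) with hS
  have huNotErase : u ∉ σ.erase x := fun h => huσ (Finset.mem_of_mem_erase h)
  have hScard : S.card = n + 1 := by
    rw [hS, Finset.card_insert_of_notMem huNotErase,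
      Finset.card_erase_of_mem hxσ, hσcard]; omega
  have hsub : (S : Set ℕ) ⊆ {w : ℕ | w ≠ x ∧ ({x, w} : Finset ℕ) ∈ K} := by
    intro w hw
    simp only [hS, Finset.coe_insert, Set.mem_insert_iff, Finset.mem_coe,
      Finset.mem_erase] at hw
    rcases hw with rfl | ⟨hwx, hwσ⟩
    · refine ⟨fun h => huσ (h ▸ hxσ), hdown _ huK _ ?_⟩
      intro y hy
      simp only [Finset.mem_insert, Finset.mem_singleton] at hy
      rcases hy with rfl | rfl
      · exact Finset.mem_insert_of_mem hxτ
      · exact Finset.mem_insert_self _ _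
    · refine ⟨hwx, hdown σ hσK _ ?_⟩
      intro y hy
      simp only [Finset.mem_insert, Finset.mem_singleton] at hy
      rcases hy with rfl | rfl
      · exact hxσ
      · exact hwσ
  have hfin : {w : ℕ | w ≠ x ∧ ({x, w} : Finset ℕ) ∈ K}.Finite := by
    apply (Finset.range m).finite_toSet.subset
    intro w hw
    exact hvert _ hw.2 (by simp)
  calc n + 1 = (S : Set ℕ).ncard := by rw [Set.ncard_coe_finset, hScard]
    _ ≤ _ := Set.ncard_le_ncard hsub hfin
end

section
/- Let C be a cochain complex of modules indexed by integers l, whose l-th term is a direct sum ⨁_{J ∈ T, |J| = l} R_J of copies of a ring R indexed by the collection T = {J : σ ⊆ J ⊆ [2, m]} for a fixed σ ⊆ [2, m−1], and whose differential maps R_J isomorphically onto R_{J∪{m}} when m ∉ J and J ≠ [2, m−1], maps R_{[2,m−1]} to 0, and maps R_J to 0 when m ∈ J. Then the cohomology of C is R concentrated in degree m − 2, generated by the class of R_{[2,m−1]}. -/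
/-- The index set of the cochain complex: `T = {J : σ ⊆ J ⊆ [2, m], J ≠ [2, m]}`
restricted to degree `l` (grading by cardinality).  (The summand indexed by the full
interval `[2, m]` does not occur in the complex `ker f_n`.) -/
abbrev Idx (σ : Finset ℕ) (m l : ℕ) : Type :=
  {J : Finset ℕ // σ ⊆ J ∧ J ⊆ Finset.Icc 2 m ∧ J ≠ Finset.Icc 2 m ∧ J.card = l}

namespace CohConcAux

variable {σ : Finset ℕ} {m l : ℕ}

noncomputable instance : Fintype (Idx σ m l) :=
  Fintype.ofInjective
    (fun J => (⟨J.1, Finset.mem_powerset.mpr J.2.2.1⟩ :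
      {s // s ∈ (Finset.Icc 2 m).powerset}))
    (fun a b h => by apply Subtype.ext; have h2 := congrArg Subtype.val h; simpa using h2)

lemma m_notMem (hm : 3 ≤ m) : m ∉ Finset.Icc 2 (m - 1) := by
  simp [Finset.mem_Icc]; omega

lemma card_Icc' (hm : 3 ≤ m) : (Finset.Icc 2 (m - 1)).card = m - 2 := by
  rw [Nat.card_Icc]; omega

lemma insert_Icc (hm : 3 ≤ m) : insert m (Finset.Icc 2 (m - 1)) = Finset.Icc 2 m := by
  ext x; simp [Finset.mem_Icc]; omega

/-- The "partner" `J ∪ {m}` of an index `J` with `m ∉ J`, `J ≠ [2, m-1]`. -/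
def up (hm : 3 ≤ m) (J : Idx σ m l) (h1 : m ∉ J.1) (h2 : J.1 ≠ Finset.Icc 2 (m - 1)) :
    Idx σ m (l + 1) :=
  ⟨insert m J.1,
    J.2.1.trans (Finset.subset_insert _ _),
    Finset.insert_subset (by simp [Finset.mem_Icc]; omega) J.2.2.1,
    by
      intro he
      apply h2
      have h3 : J.1 = (insert m J.1).erase m := (Finset.erase_insert h1).symm
      rw [h3, he, ← insert_Icc hm, Finset.erase_insert (m_notMem hm)],
    by rw [Finset.card_insert_of_notMem h1, J.2.2.2.2]⟩

lemma up_val (hm : 3 ≤ m) (J : Idx σ m l) (h1 : m ∉ J.1)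
    (h2 : J.1 ≠ Finset.Icc 2 (m - 1)) : (up hm J h1 h2).1 = insert m J.1 := rfl

/-- The "partner" `J' \ {m}` of an index `J'` with `m ∈ J'`. -/
def down (hm : 3 ≤ m) (hσ : σ ⊆ Finset.Icc 2 (m - 1)) (J' : Idx σ m (l + 1))
    (h : m ∈ J'.1) : Idx σ m l :=
  ⟨J'.1.erase m,
    Finset.subset_erase.mpr ⟨J'.2.1, fun hmσ => m_notMem hm (hσ hmσ)⟩,
    (Finset.erase_subset _ _).trans J'.2.2.1,
    by
      intro he
      have : m ∈ J'.1.erase m := by rw [he]; simp [Finset.mem_Icc]; omega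
      exact Finset.notMem_erase m J'.1 this,
    by rw [Finset.card_erase_of_mem h, J'.2.2.2.2]; omega⟩

lemma down_notMem (hm : 3 ≤ m) (hσ : σ ⊆ Finset.Icc 2 (m - 1)) (J' : Idx σ m (l + 1))
    (h : m ∈ J'.1) : m ∉ (down hm hσ J' h).1 := Finset.notMem_erase _ _

lemma down_ne (hm : 3 ≤ m) (hσ : σ ⊆ Finset.Icc 2 (m - 1)) (J' : Idx σ m (l + 1))
    (h : m ∈ J'.1) : (down hm hσ J' h).1 ≠ Finset.Icc 2 (m - 1) := by
  intro he
  apply J'.2.2.2.1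
  have h3 : J'.1 = insert m (J'.1.erase m) := (Finset.insert_erase h).symm
  rw [h3]
  show insert m (down hm hσ J' h).1 = _
  rw [he, insert_Icc hm]

lemma down_insert (hm : 3 ≤ m) (hσ : σ ⊆ Finset.Icc 2 (m - 1)) (J' : Idx σ m (l + 1))
    (h : m ∈ J'.1) : J'.1 = insert m (down hm hσ J' h).1 :=
  (Finset.insert_erase h).symm

end CohConcAux

open CohConcAux in
/-- A cochain complex whose `l`-th term is `⨁_{J ∈ T, |J| = l} R_J`, whose differential
maps `R_J` isomorphically onto `R_{J ∪ {m}}` when `m ∉ J` and `J ≠ [2, m−1]`, and maps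
`R_J` to `0` when `m ∈ J` or `J = [2, m−1]`, has cohomology `R` concentrated in degree
`m − 2`, generated by the class of the generator of `R_{[2, m−1]}`. -/
theorem cohomology_concentrated (R : Type*) [CommRing R] (m : ℕ) (hm : 3 ≤ m)
    (σ : Finset ℕ) (hσ : σ ⊆ Finset.Icc 2 (m - 1))
    (d : ∀ l, (Idx σ m l → R) →ₗ[R] (Idx σ m (l + 1) → R))
    (hiso : ∀ l (J : Idx σ m l) (J' : Idx σ m (l + 1)),
      J'.1 = insert m J.1 → m ∉ J.1 → J.1 ≠ Finset.Icc 2 (m - 1) →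
      ∃ u : Rˣ, ∀ r : R, d l (Pi.single J r) = Pi.single J' ((u : R) * r))
    (hzero : ∀ l (J : Idx σ m l), (m ∈ J.1 ∨ J.1 = Finset.Icc 2 (m - 1)) →
      ∀ r : R, d l (Pi.single J r) = 0) :
    (∀ l, l + 1 ≠ m - 2 → ∀ x, d (l + 1) x = 0 → ∃ y, d l y = x) ∧
    (0 ≠ m - 2 → ∀ x : Idx σ m 0 → R, d 0 x = 0 → x = 0) ∧
    (∀ l₀, l₀ + 1 = m - 2 →
      ∃ (φ : (LinearMap.ker (d (l₀ + 1)) ⧸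
            (LinearMap.range (d l₀)).comap (LinearMap.ker (d (l₀ + 1))).subtype)
          ≃ₗ[R] R)
        (J₀ : Idx σ m (l₀ + 1)) (e : LinearMap.ker (d (l₀ + 1))),
        J₀.1 = Finset.Icc 2 (m - 1) ∧
        (e : Idx σ m (l₀ + 1) → R) = Pi.single J₀ 1 ∧
        φ (Submodule.Quotient.mk e) = 1) := by
  classical
  -- the unit attached to an index `J` with `m ∉ J`, `J ≠ [2, m-1]`
  have main : ∀ l (J : Idx σ m l), ∃ v : Rˣ,
      (m ∉ J.1 ∧ J.1 ≠ Finset.Icc 2 (m - 1)) → ∀ (J' : Idx σ m (l + 1)),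
        J'.1 = insert m J.1 → ∀ r : R, d l (Pi.single J r) = Pi.single J' ((v : R) * r) := by
    intro l J
    by_cases h : m ∉ J.1 ∧ J.1 ≠ Finset.Icc 2 (m - 1)
    · obtain ⟨u, hu⟩ := hiso l J (up hm J h.1 h.2) rfl h.1 h.2
      refine ⟨u, fun _ J' hJ' r => ?_⟩
      have : J' = up hm J h.1 h.2 := Subtype.ext hJ'
      rw [this]; exact hu r
    · exact ⟨1, fun hc => absurd hc h⟩
  choose v hv using main
  -- evaluation lemma A: `(d x) J' = 0` whenever `m ∉ J'`
  have evalA : ∀ l (x : Idx σ m l → R) (J' : Idx σ m (l + 1)), m ∉ J'.1 →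
      d l x J' = 0 := by
    intro l x J' hJ'
    have hx : x = ∑ J : Idx σ m l, Pi.single J (x J) := (Finset.univ_sum_single x).symm
    calc d l x J' = (∑ J : Idx σ m l, d l (Pi.single J (x J))) J' := by
          rw [← map_sum, ← hx]
      _ = ∑ J : Idx σ m l, d l (Pi.single J (x J)) J' := Finset.sum_apply _ _ _
      _ = 0 := by
          apply Finset.sum_eq_zero
          intro J _
          by_cases hc : m ∈ J.1 ∨ J.1 = Finset.Icc 2 (m - 1)
          · rw [hzero l J hc]; rfl
          · push_neg at hc
            rw [hv l J hc (up hm J hc.1 hc.2) rfl (x J)]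
            have hne : J' ≠ up hm J hc.1 hc.2 := by
              intro he
              exact hJ' (he ▸ (Finset.mem_insert_self m J.1 :
                m ∈ (up hm J hc.1 hc.2).1))
            rw [Pi.single_apply, if_neg hne]
  -- evaluation lemma B: `(d x) J' = v * x J₀` when `J' = J₀ ∪ {m}`
  have evalB : ∀ l (x : Idx σ m l → R) (J₀ : Idx σ m l) (J' : Idx σ m (l + 1)),
      J'.1 = insert m J₀.1 → m ∉ J₀.1 → J₀.1 ≠ Finset.Icc 2 (m - 1) →
      d l x J' = (v l J₀ : R) * x J₀ := by
    intro l x J₀ J' hins h1 h2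
    have hx : x = ∑ J : Idx σ m l, Pi.single J (x J) := (Finset.univ_sum_single x).symm
    calc d l x J' = (∑ J : Idx σ m l, d l (Pi.single J (x J))) J' := by
          rw [← map_sum, ← hx]
      _ = ∑ J : Idx σ m l, d l (Pi.single J (x J)) J' := Finset.sum_apply _ _ _
      _ = (v l J₀ : R) * x J₀ := by
          rw [Finset.sum_eq_single J₀]
          · rw [hv l J₀ ⟨h1, h2⟩ J' hins (x J₀), Pi.single_eq_same]
          · intro J _ hJne
            by_cases hc : m ∈ J.1 ∨ J.1 = Finset.Icc 2 (m - 1)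
            · rw [hzero l J hc]; rfl
            · push_neg at hc
              rw [hv l J hc (up hm J hc.1 hc.2) rfl (x J)]
              have hne : J' ≠ up hm J hc.1 hc.2 := by
                intro he
                apply hJne
                apply Subtype.ext
                have : insert m J.1 = insert m J₀.1 := by
                  rw [← up_val hm J hc.1 hc.2, ← he, hins]
                calc J.1 = (insert m J.1).erase m := (Finset.erase_insert hc.1).symm
                  _ = (insert m J₀.1).erase m := by rw [this]
                  _ = J₀.1 := Finset.erase_insert h1
              rw [Pi.single_apply, if_neg hne]
          · intro h; exact absurd (Finset.mem_univ J₀) h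
  -- key exactness lemma
  have key : ∀ l (x : Idx σ m (l + 1) → R), d (l + 1) x = 0 →
      (∀ J : Idx σ m (l + 1), J.1 = Finset.Icc 2 (m - 1) → x J = 0) →
      ∃ y, d l y = x := by
    intro l x hx hIcc
    have hA : ∀ J : Idx σ m (l + 1), m ∉ J.1 → x J = 0 := by
      intro J hJ
      by_cases h2 : J.1 = Finset.Icc 2 (m - 1)
      · exact hIcc J h2
      · have hB := evalB (l + 1) x J (up hm J hJ h2) rfl hJ h2
        rw [hx] at hB
        have h0 : (v (l + 1) J : R) * x J = 0 := hB.symm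
        exact (Units.mul_right_eq_zero _).mp h0
    refine ⟨fun J => if h : m ∉ J.1 ∧ J.1 ≠ Finset.Icc 2 (m - 1)
        then ((v l J)⁻¹ : Rˣ) * x (up hm J h.1 h.2) else 0, ?_⟩
    funext J'
    by_cases hJ' : m ∈ J'.1
    · have h1 := down_notMem hm hσ J' hJ'
      have h2 := down_ne hm hσ J' hJ'
      have hins := down_insert hm hσ J' hJ'
      rw [evalB l _ (down hm hσ J' hJ') J' hins h1 h2]
      have hupd : up hm (down hm hσ J' hJ') h1 h2 = J' :=
        Subtype.ext (Finset.insert_erase hJ')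
      simp only [dif_pos (show m ∉ (down hm hσ J' hJ').1 ∧ _ from ⟨h1, h2⟩)]
      rw [hupd, Units.mul_inv_cancel_left]
    · rw [evalA l _ J' hJ']
      exact (hA J' hJ').symm
  refine ⟨?_, ?_, ?_⟩
  · -- exactness away from degree m - 2
    intro l hl x hx
    apply key l x hx
    intro J hJ
    exfalso
    apply hl
    rw [← J.2.2.2.2, hJ, card_Icc' hm]
  · -- injectivity in degree 0
    intro _ x hx
    funext J
    have hJ0 : J.1 = ∅ := Finset.card_eq_zero.mp J.2.2.2.2
    have h1 : m ∉ J.1 := by rw [hJ0]; simp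
    have h2 : J.1 ≠ Finset.Icc 2 (m - 1) := by
      rw [hJ0]
      intro h
      have := congrArg Finset.card h
      rw [Finset.card_empty, card_Icc' hm] at this
      omega
    have hB := evalB 0 x J (up hm J h1 h2) rfl h1 h2
    rw [hx] at hB
    have h0 : (v 0 J : R) * x J = 0 := hB.symm
    exact (Units.mul_right_eq_zero _).mp h0
  · -- cohomology in degree m - 2
    intro l₀ hl₀
    set J₀ : Idx σ m (l₀ + 1) := ⟨Finset.Icc 2 (m - 1), hσ,
      Finset.Icc_subset_Icc le_rfl (by omega),
      by
        intro h
        have := congrArg Finset.card h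
        rw [card_Icc' hm, Nat.card_Icc] at this
        omega,
      by rw [card_Icc' hm, hl₀]⟩ with hJ₀def
    have hJ₀ : J₀.1 = Finset.Icc 2 (m - 1) := rfl
    set e : LinearMap.ker (d (l₀ + 1)) :=
      ⟨Pi.single J₀ 1, LinearMap.mem_ker.mpr (hzero (l₀ + 1) J₀ (Or.inr hJ₀) 1)⟩ with hedef
    set N : Submodule R (LinearMap.ker (d (l₀ + 1))) :=
      (LinearMap.range (d l₀)).comap (LinearMap.ker (d (l₀ + 1))).subtype with hNdef
    set ψ : LinearMap.ker (d (l₀ + 1)) →ₗ[R] R :=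
      (LinearMap.proj J₀).comp (LinearMap.ker (d (l₀ + 1))).subtype with hψdef
    have hψ : ∀ z : LinearMap.ker (d (l₀ + 1)), ψ z = (z : Idx σ m (l₀ + 1) → R) J₀ :=
      fun z => rfl
    have hNψ : N ≤ LinearMap.ker ψ := by
      intro z hz
      obtain ⟨y, hy⟩ := Submodule.mem_comap.mp hz
      rw [LinearMap.mem_ker, hψ]
      have : (z : Idx σ m (l₀ + 1) → R) = d l₀ y := hy.symm
      rw [this]
      exact evalA l₀ y J₀ (m_notMem hm)
    set φ' : (LinearMap.ker (d (l₀ + 1)) ⧸ N) →ₗ[R] R := Submodule.liftQ N ψ hNψ with hφ'def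
    have hsurj : Function.Surjective φ' := by
      intro r
      refine ⟨Submodule.Quotient.mk (r • e), ?_⟩
      have hval : (e : Idx σ m (l₀ + 1) → R) J₀ = 1 := Pi.single_eq_same _ _
      rw [hφ'def, Submodule.liftQ_apply, map_smul, hψ, hval, smul_eq_mul, mul_one]
    have hinj : Function.Injective φ' := by
      rw [← LinearMap.ker_eq_bot, Submodule.ker_liftQ_eq_bot]
      intro z hz
      rw [LinearMap.mem_ker, hψ] at hz
      have hzker : d (l₀ + 1) (z : Idx σ m (l₀ + 1) → R) = 0 := z.2
      obtain ⟨y, hy⟩ := key l₀ (z : Idx σ m (l₀ + 1) → R) hzker (by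
        intro J hJ
        have : J = J₀ := Subtype.ext (hJ.trans hJ₀.symm)
        rw [this]; exact hz)
      exact Submodule.mem_comap.mpr ⟨y, hy⟩
    refine ⟨LinearEquiv.ofBijective φ' ⟨hinj, hsurj⟩, J₀, e, hJ₀, rfl, ?_⟩
    show φ' (Submodule.Quotient.mk e) = 1
    have hval : (e : Idx σ m (l₀ + 1) → R) J₀ = 1 := Pi.single_eq_same _ _
    rw [hφ'def, Submodule.liftQ_apply, hψ, hval]
end
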